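/- arXiv:2603.01287 — 7 statements merged into one kernel-verified Lean document; each statement's English description precedes it below -/
import Mathlib

section
/- Let K be a division ring, σ an endomorphism of K, δ a σ-derivation of K, and a ∈ K. Then the (σ,δ)-centralizer C^{σ,δ}(a) = {x ∈ K* : σ(x)ax⁻¹ + δ(x)x⁻¹ = a} ∪ {0} is a subdivision ring of K (closed under addition, multiplication, and inverses of nonzero elements, and containing 1). -/
/-- The (σ,δ)-centralizer `C^{σ,δ}(a) = {x ∈ K* : σ(x)ax⁻¹ + δ(x)x⁻¹ = a} ∪ {0}`
is a subdivision ring of a division ring `K`: it contains `0` and `1` and is closed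
under addition, negation, multiplication and inverses of nonzero elements. -/
theorem centralizer_is_subdivision_ring {K : Type*} [DivisionRing K]
    (σ : K →+* K) (δ : K →+ K)
    (hδ : ∀ a b : K, δ (a * b) = σ a * δ b + δ a * b)
    (a : K) (C : Set K)
    (hC : C = {x : K | x = 0 ∨ (x ≠ 0 ∧ σ x * a * x⁻¹ + δ x * x⁻¹ = a)}) :
    (0 : K) ∈ C ∧ (1 : K) ∈ C ∧
    (∀ x ∈ C, ∀ y ∈ C, x + y ∈ C) ∧
    (∀ x ∈ C, -x ∈ C) ∧
    (∀ x ∈ C, ∀ y ∈ C, x * y ∈ C) ∧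
    (∀ x ∈ C, x ≠ 0 → x⁻¹ ∈ C) := by
  have hδ1 : δ 1 = 0 := by
    have h := hδ 1 1
    simp only [mul_one, one_mul, map_one] at h
    have : δ 1 + δ 1 = δ 1 + 0 := by rw [add_zero, ← h]
    exact (add_left_cancel this)
  -- membership is equivalent to the linear condition σ(x)·a + δ(x) = a·x
  have key : ∀ x : K, x ∈ C ↔ σ x * a + δ x = a * x := by
    intro x
    rw [hC]
    simp only [Set.mem_setOf_eq]
    constructor
    · rintro (rfl | ⟨hx, h⟩)
      · simp
      · have h' := congrArg (· * x) h
        simpa [add_mul, mul_assoc, inv_mul_cancel₀ hx] using h'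
    · intro h
      by_cases hx : x = 0
      · exact Or.inl hx
      · refine Or.inr ⟨hx, ?_⟩
        have h' := congrArg (· * x⁻¹) h
        simpa [add_mul, mul_assoc, mul_inv_cancel₀ hx] using h'
  refine ⟨?_, ?_, ?_, ?_, ?_, ?_⟩
  · rw [key]; simp
  · rw [key]; simp [hδ1]
  · intro x hx y hy
    rw [key] at hx hy ⊢
    calc σ (x + y) * a + δ (x + y)
        = (σ x * a + δ x) + (σ y * a + δ y) := by
          rw [map_add, map_add]; noncomm_ring
      _ = a * x + a * y := by rw [hx, hy]
      _ = a * (x + y) := (mul_add a x y).symm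
  · intro x hx
    rw [key] at hx ⊢
    calc σ (-x) * a + δ (-x) = -(σ x * a + δ x) := by
          rw [map_neg, map_neg]; noncomm_ring
      _ = -(a * x) := by rw [hx]
      _ = a * (-x) := (mul_neg a x).symm
  · intro x hx y hy
    rw [key] at hx hy ⊢
    calc σ (x * y) * a + δ (x * y)
        = σ x * (σ y * a + δ y) + δ x * y := by
          rw [map_mul, hδ]; noncomm_ring
      _ = σ x * (a * y) + δ x * y := by rw [hy]
      _ = (σ x * a + δ x) * y := by noncomm_ring
      _ = a * (x * y) := by rw [hx]; noncomm_ring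
  · intro x hx hx0
    rw [key] at hx ⊢
    have h := hδ x⁻¹ x
    rw [inv_mul_cancel₀ hx0, hδ1] at h
    have e1 : δ x⁻¹ * x = -(σ x⁻¹ * δ x) := eq_neg_of_add_eq_zero_right h.symm
    have hmul : (σ x⁻¹ * a + δ x⁻¹) * x = a := by
      calc (σ x⁻¹ * a + δ x⁻¹) * x
          = σ x⁻¹ * (a * x) + δ x⁻¹ * x := by noncomm_ring
        _ = σ x⁻¹ * (a * x) + -(σ x⁻¹ * δ x) := by rw [e1]
        _ = σ x⁻¹ * (a * x - δ x) := by noncomm_ring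
        _ = σ x⁻¹ * (σ x * a) := by rw [← hx]; noncomm_ring
        _ = (σ x⁻¹ * σ x) * a := (mul_assoc _ _ _).symm
        _ = a := by rw [← map_mul, inv_mul_cancel₀ hx0, map_one, one_mul]
    have h' := congrArg (· * x⁻¹) hmul
    simpa [mul_assoc, mul_inv_cancel₀ hx0] using h'
end

section
/- Let K be a division ring, σ an endomorphism of K, δ a σ-derivation of K, and f(t) ∈ R = K[t;σ,δ] a nonzero polynomial of degree n. Then the set of right roots of f (elements a ∈ K with f(a) = 0) is contained in the union of at most n distinct (σ,δ)-conjugacy classes Δ(a₁),…,Δ(a_r), r ≤ n. -/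
/-!
A right root `a` of `f` gives a factorization `f = g (t - a)` with `deg g = deg f - 1`, and the
product formula `(g (t - a))(b) = g(b^{b-a}) (b - a)` for `b ≠ a` shows that every other root
`b` of `f` is conjugate to a root `b^{b-a}` of `g`. Induction on the degree then places the roots
of `f` in `Δ(a)` together with the at most `deg f - 1` classes that contain the roots of `g`.
-/

theorem mul_right_mem_of_mem_closure {R : Type*} [NonUnitalNonAssocRing R] {S : Set R}
    {T : AddSubgroup R} {x g : R} (h : ∀ s ∈ S, s * x ∈ T) (hg : g ∈ AddSubgroup.closure S) :
    g * x ∈ T :=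
  (AddSubgroup.closure_le (T.comap (AddMonoidHom.mulRight x))).2 h hg

theorem mul_left_mem_of_mem_closure {R : Type*} [NonUnitalNonAssocRing R] {S : Set R}
    {T : AddSubgroup R} {x g : R} (h : ∀ s ∈ S, x * s ∈ T) (hg : g ∈ AddSubgroup.closure S) :
    x * g ∈ T :=
  (AddSubgroup.closure_le (T.comap (AddMonoidHom.mulLeft x))).2 h hg

namespace OreExtension

variable {K R : Type*} [DivisionRing K] [Ring R]

section Degree

variable (ι : K →+* R) (t : R)

/-- `c ↦ ∑ ι (c i) * t ^ i`; definitionally `c.sum fun i b => ι b * t ^ i`. -/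
noncomputable def ofCoeffs : (ℕ →₀ K) →+ R :=
  Finsupp.liftAddHom fun i => (AddMonoidHom.mulRight (t ^ i)).comp ι.toAddMonoidHom

def degLt (m : ℕ) : AddSubgroup R :=
  AddSubgroup.closure {g | ∃ (b : K) (i : ℕ), i < m ∧ ι b * t ^ i = g}

def HasDegree (g : R) (m : ℕ) : Prop :=
  ∃ d : ℕ →₀ K, g = ofCoeffs ι t d ∧ d m ≠ 0 ∧ ∀ i, m < i → d i = 0

variable {ι t}

theorem ofCoeffs_single (i : ℕ) (b : K) : ofCoeffs ι t (Finsupp.single i b) = ι b * t ^ i := by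
  simp [ofCoeffs]

theorem monomial_mem_degLt {b : K} {i m : ℕ} (h : i < m) : ι b * t ^ i ∈ degLt ι t m :=
  AddSubgroup.subset_closure ⟨b, i, h, rfl⟩

theorem degLt_mono {m m' : ℕ} (h : m ≤ m') : degLt ι t m ≤ degLt ι t m' :=
  AddSubgroup.closure_mono fun _ ⟨b, i, hi, hg⟩ => ⟨b, i, hi.trans_le h, hg⟩

theorem ofCoeffs_mem_degLt {e : ℕ →₀ K} {m : ℕ} (he : ∀ i, m ≤ i → e i = 0) :
    ofCoeffs ι t e ∈ degLt ι t m :=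
  AddSubgroup.sum_mem _ fun i hi =>
    monomial_mem_degLt (not_le.1 fun h => Finsupp.mem_support_iff.1 hi (he i h))

theorem exists_ofCoeffs_of_mem_degLt {g : R} {m : ℕ} (hg : g ∈ degLt ι t m) :
    ∃ e : ℕ →₀ K, g = ofCoeffs ι t e ∧ ∀ i, m ≤ i → e i = 0 := by
  induction hg using AddSubgroup.closure_induction with
  | mem _ h =>
    obtain ⟨b, i, hi, rfl⟩ := h
    exact ⟨Finsupp.single i b, (ofCoeffs_single i b).symm,
      fun j hj => Finsupp.single_eq_of_ne (by omega)⟩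
  | zero => exact ⟨0, (map_zero _).symm, fun _ _ => rfl⟩
  | add _ _ _ _ h₁ h₂ =>
    obtain ⟨e₁, rfl, he₁⟩ := h₁
    obtain ⟨e₂, rfl, he₂⟩ := h₂
    exact ⟨e₁ + e₂, (map_add _ _ _).symm, fun i hi => by simp [he₁ i hi, he₂ i hi]⟩
  | neg _ _ h =>
    obtain ⟨e, rfl, he⟩ := h
    exact ⟨-e, (map_neg _ _).symm, fun i hi => by simp [he i hi]⟩

theorem mul_t_mem_degLt {g : R} {m : ℕ} (hg : g ∈ degLt ι t m) : g * t ∈ degLt ι t (m + 1) :=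
  mul_right_mem_of_mem_closure (by
    rintro _ ⟨b, i, hi, rfl⟩
    rw [mul_assoc, ← pow_succ]
    exact monomial_mem_degLt (by omega)) hg

theorem ι_mul_mem_degLt (k : K) {g : R} {m : ℕ} (hg : g ∈ degLt ι t m) :
    ι k * g ∈ degLt ι t m :=
  mul_left_mem_of_mem_closure (by
    rintro _ ⟨b, i, hi, rfl⟩
    rw [← mul_assoc, ← map_mul]
    exact monomial_mem_degLt hi) hg

theorem hasDegree_ι {k : K} (hk : k ≠ 0) : HasDegree ι t (ι k) 0 :=
  ⟨Finsupp.single 0 k, by simp [ofCoeffs_single], by simpa using hk,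
    fun _ hi => Finsupp.single_eq_of_ne (by omega)⟩

variable {σ : K →+* K} {δ : K →+ K} (hrel : ∀ x : K, t * ι x = ι (σ x) * t + ι (δ x))
include hrel

theorem pow_mul_ι_mem_degLt (i : ℕ) (b : K) : t ^ i * ι b ∈ degLt ι t (i + 1) := by
  induction i generalizing b with
  | zero => simpa using monomial_mem_degLt (ι := ι) (t := t) (b := b) Nat.zero_lt_one
  | succ i ih =>
    rw [pow_succ, mul_assoc, hrel, mul_add, ← mul_assoc]
    exact add_mem (mul_t_mem_degLt (ih (σ b))) (degLt_mono (by omega) (ih (δ b)))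

theorem mul_ι_mem_degLt (a : K) {g : R} {m : ℕ} (hg : g ∈ degLt ι t m) :
    g * ι a ∈ degLt ι t m :=
  mul_right_mem_of_mem_closure (by
    rintro _ ⟨b, i, hi, rfl⟩
    rw [mul_assoc]
    exact ι_mul_mem_degLt b (degLt_mono hi (pow_mul_ι_mem_degLt hrel i a))) hg

theorem HasDegree.mul_X_sub {g : R} {m : ℕ} (a : K) (hg : HasDegree ι t g m) :
    HasDegree ι t (g * (t - ι a)) (m + 1) := by
  obtain ⟨d, rfl, hdm, hd⟩ := hg
  have hlower : ofCoeffs ι t d * (t - ι a) - ι (d m) * t ^ (m + 1) ∈ degLt ι t (m + 1) := by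
    have hsplit : ofCoeffs ι t d = ι (d m) * t ^ m + ofCoeffs ι t (d.erase m) := by
      rw [← ofCoeffs_single, ← map_add, Finsupp.single_add_erase]
    have hrest : ofCoeffs ι t d * (t - ι a) - ι (d m) * t ^ (m + 1) =
        ofCoeffs ι t (d.erase m) * t - ofCoeffs ι t d * ι a := by
      rw [mul_sub, hsplit, pow_succ]
      noncomm_ring
    rw [hrest]
    refine sub_mem (mul_t_mem_degLt (ofCoeffs_mem_degLt fun i hi => ?_))
      (mul_ι_mem_degLt hrel a (ofCoeffs_mem_degLt fun i hi => hd i (by omega)))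
    rcases hi.eq_or_lt with rfl | hi
    · exact Finsupp.erase_same
    · rw [Finsupp.erase_ne hi.ne', hd i hi]
  obtain ⟨e, he, he0⟩ := exists_ofCoeffs_of_mem_degLt hlower
  refine ⟨Finsupp.single (m + 1) (d m) + e, ?_, by simpa [he0 (m + 1) le_rfl] using hdm,
    fun i hi => by simp [Finsupp.single_eq_of_ne (by omega : i ≠ m + 1), he0 i hi.le]⟩
  rw [map_add, ofCoeffs_single, ← he]
  abel

end Degree

section Basis

variable {ι : K →+* R} {t : R} (hbasis : ∀ f : R, ∃! c : ℕ →₀ K, f = ofCoeffs ι t c)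
include hbasis

theorem HasDegree.ne_zero {g : R} {m : ℕ} (hg : HasDegree ι t g m) : g ≠ 0 := by
  rintro rfl
  obtain ⟨d, hd, hdm, -⟩ := hg
  exact hdm (by rw [(hbasis 0).unique hd (map_zero _).symm]; rfl)

theorem HasDegree.unique {g : R} {m m' : ℕ} (h : HasDegree ι t g m) (h' : HasDegree ι t g m') :
    m = m' := by
  obtain ⟨d, hd, hdm, hdgt⟩ := h
  obtain ⟨d', hd', hdm', hdgt'⟩ := h'
  obtain rfl := (hbasis g).unique hd hd'
  rcases lt_trichotomy m m' with hlt | heq | hgt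
  exacts [absurd (hdgt m' hlt) hdm', heq, absurd (hdgt' m hgt) hdm]

theorem exists_hasDegree {g : R} (hg : g ≠ 0) : ∃ m, HasDegree ι t g m := by
  obtain ⟨d, hd, -⟩ := hbasis g
  have hsupp : d.support.Nonempty :=
    Finsupp.support_nonempty_iff.2 fun h => hg (by rw [hd, h, map_zero])
  refine ⟨d.support.max' hsupp, d, hd, Finsupp.mem_support_iff.1 (d.support.max'_mem hsupp),
    fun i hi => ?_⟩
  by_contra h
  exact not_le.2 hi (d.support.le_max' i (Finsupp.mem_support_iff.2 h))

variable {σ : K →+* K} {δ : K →+ K} (hrel : ∀ x : K, t * ι x = ι (σ x) * t + ι (δ x))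
include hrel

theorem eq_zero_of_ι_eq_mul_X_sub {k a : K} {g : R} (h : ι k = g * (t - ι a)) : k = 0 := by
  by_contra hk
  have hι : HasDegree ι t (ι k) 0 := hasDegree_ι hk
  have hg : g ≠ 0 := by
    rintro rfl
    exact hι.ne_zero hbasis (by rw [h, zero_mul])
  obtain ⟨m, hm⟩ := exists_hasDegree hbasis hg
  have := hι.unique hbasis (h ▸ hm.mul_X_sub hrel a)
  omega

end Basis

section Conjugation

variable (σ : K →+* K) (δ : K →+ K)

/-- The conjugate written `a^x` above. -/
def sigmaDeltaConj (a x : K) : K := σ x * a * x⁻¹ + δ x * x⁻¹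

variable {σ δ} (hδ : ∀ a b : K, δ (a * b) = σ a * δ b + δ a * b)
include hδ

theorem sigmaDeltaConj_one (a : K) : sigmaDeltaConj σ δ a 1 = a := by
  have hδ1 : δ 1 = 0 := by simpa using hδ 1 1
  simp [sigmaDeltaConj, hδ1]

theorem sigmaDeltaConj_sigmaDeltaConj (a : K) {x : K} (hx : x ≠ 0) (y : K) :
    sigmaDeltaConj σ δ (sigmaDeltaConj σ δ a x) y = sigmaDeltaConj σ δ a (y * x) := by
  have hcancel : δ y * x * (x⁻¹ * y⁻¹) = δ y * y⁻¹ := by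
    rw [mul_assoc, ← mul_assoc x, mul_inv_cancel₀ hx, one_mul]
  simp only [sigmaDeltaConj, map_mul, hδ, mul_inv_rev, mul_add, add_mul, hcancel]
  simp only [mul_assoc]
  abel

theorem sigmaDeltaConj_inv (a : K) {x : K} (hx : x ≠ 0) :
    sigmaDeltaConj σ δ (sigmaDeltaConj σ δ a x) x⁻¹ = a := by
  rw [sigmaDeltaConj_sigmaDeltaConj hδ a hx, inv_mul_cancel₀ hx, sigmaDeltaConj_one hδ]

end Conjugation

section Evaluation

variable {ι : K →+* R} {t : R} {σ : K →+* K} {δ : K →+ K}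

theorem X_sub_sigmaDeltaConj_mul (hrel : ∀ x : K, t * ι x = ι (σ x) * t + ι (δ x))
    (b : K) {x : K} (hx : x ≠ 0) :
    (t - ι (sigmaDeltaConj σ δ b x)) * ι x = ι (σ x) * (t - ι b) := by
  have hK : sigmaDeltaConj σ δ b x * x = σ x * b + δ x := by
    simp only [sigmaDeltaConj, add_mul, mul_assoc, inv_mul_cancel₀ hx, mul_one]
  rw [sub_mul, hrel, ← map_mul, hK, map_add, map_mul, mul_sub]
  abel

variable (hrel : ∀ x : K, t * ι x = ι (σ x) * t + ι (δ x))
  (hbasis : ∀ f : R, ∃! c : ℕ →₀ K, f = ofCoeffs ι t c)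
  {eval : R → K → K} (heval : ∀ (f : R) (a : K), ∃ g : R, f - ι (eval f a) = g * (t - ι a))
include hrel hbasis heval

theorem eval_eq_of_sub_eq_mul {f g : R} {k a : K} (h : f - ι k = g * (t - ι a)) :
    eval f a = k := by
  obtain ⟨g₀, h₀⟩ := heval f a
  refine sub_eq_zero.1 (eq_zero_of_ι_eq_mul_X_sub hbasis hrel (a := a) (g := g - g₀) ?_)
  rw [map_sub, sub_mul, ← h, ← h₀]
  abel

theorem eval_mul_X_sub (g : R) {a b : K} (hba : b ≠ a) :
    eval (g * (t - ι a)) b = eval g (sigmaDeltaConj σ δ b (b - a)) * (b - a) := by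
  set c := b - a
  set b' := sigmaDeltaConj σ δ b c
  set e := eval g b'
  obtain ⟨h, hh⟩ := heval g b'
  have hg : g = ι e + h * (t - ι b') := by
    rw [← hh, add_sub_cancel]
  have hta : t - ι a = (t - ι b) + ι c := by
    rw [map_sub]
    abel
  have hfac : (t - ι b') * ι c = ι (σ c) * (t - ι b) :=
    X_sub_sigmaDeltaConj_mul hrel b (sub_ne_zero.2 hba)
  apply eval_eq_of_sub_eq_mul hrel hbasis heval (g := ι e + h * (t - ι b') + h * ι (σ c))
  calc g * (t - ι a) - ι (e * c)
      = ι e * (t - ι b) + h * ((t - ι b') * ι c) + h * ((t - ι b') * (t - ι b)) := by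
        rw [hg, hta, map_mul]
        noncomm_ring
    _ = (ι e + h * (t - ι b') + h * ι (σ c)) * (t - ι b) := by
        rw [hfac]
        noncomm_ring

theorem HasDegree.exists_eq_mul_X_sub {f : R} {n : ℕ} (hf : HasDegree ι t f n) {a : K}
    (ha : eval f a = 0) : ∃ m g, n = m + 1 ∧ f = g * (t - ι a) ∧ HasDegree ι t g m := by
  obtain ⟨g, hfg⟩ := heval f a
  rw [ha, map_zero, sub_zero] at hfg
  have hg : g ≠ 0 := by
    rintro rfl
    exact hf.ne_zero hbasis (by rw [hfg, zero_mul])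
  obtain ⟨m, hm⟩ := exists_hasDegree hbasis hg
  exact ⟨m, g, hf.unique hbasis (hfg ▸ hm.mul_X_sub hrel a), hfg, hm⟩

variable (hδ : ∀ a b : K, δ (a * b) = σ a * δ b + δ a * b)
include hδ

theorem HasDegree.exists_conj_classes_covering_roots {n : ℕ} {f : R} (hf : HasDegree ι t f n) :
    ∃ (r : ℕ) (as : Fin r → K), r ≤ n ∧
      ∀ a : K, eval f a = 0 → ∃ (i : Fin r) (x : K), x ≠ 0 ∧ a = sigmaDeltaConj σ δ (as i) x := by
  induction n using Nat.strong_induction_on generalizing f with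
  | _ n ih =>
    obtain hroot | ⟨a₀, ha₀⟩ := (em (∃ a₀, eval f a₀ = 0)).symm
    · exact ⟨0, Fin.elim0, n.zero_le, fun a ha => (hroot ⟨a, ha⟩).elim⟩
    obtain ⟨m, g, rfl, rfl, hg⟩ := hf.exists_eq_mul_X_sub hrel hbasis heval ha₀
    obtain ⟨r, as, hr, has⟩ := ih m m.lt_succ_self hg
    refine ⟨r + 1, Fin.cons a₀ as, by omega, fun b hb => ?_⟩
    rcases eq_or_ne b a₀ with rfl | hba
    · exact ⟨0, 1, one_ne_zero, (sigmaDeltaConj_one hδ b).symm⟩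
    have hc : b - a₀ ≠ 0 := sub_ne_zero.2 hba
    have hg0 : eval g (sigmaDeltaConj σ δ b (b - a₀)) = 0 := by
      have hprod := eval_mul_X_sub hrel hbasis heval g hba
      rw [hb] at hprod
      exact (mul_eq_zero.1 hprod.symm).resolve_right hc
    obtain ⟨i, x, hx, hconj⟩ := has _ hg0
    refine ⟨i.succ, (b - a₀)⁻¹ * x, mul_ne_zero (inv_ne_zero hc) hx, ?_⟩
    rw [Fin.cons_succ, ← sigmaDeltaConj_sigmaDeltaConj hδ _ hx, ← hconj,
      sigmaDeltaConj_inv hδ b hc]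

end Evaluation

end OreExtension

/-- (Gordon–Motzkin type theorem.) Let `K` be a division ring and `R = K[t;σ,δ]` an
Ore extension (ring `R` with `ι : K → R`, `t·x = σ(x)t + δ(x)`, with the monomials
`tⁱ` a left `K`-basis, and `eval` the right evaluation characterized by
`f − ι(eval f a) ∈ R(t − a)`).  If `f ≠ 0` has degree `n` then the right roots of `f`
lie in the union of at most `n` (σ,δ)-conjugacy classes `Δ(a₁),…,Δ(a_r)`, `r ≤ n`,
where `Δ(b) = {σ(x)bx⁻¹ + δ(x)x⁻¹ : x ≠ 0}`. -/
theorem roots_in_at_most_n_conjugacy_classes {K R : Type*} [DivisionRing K] [Ring R]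
    (ι : K →+* R) (t : R) (σ : K →+* K) (δ : K →+ K)
    (hδ : ∀ a b : K, δ (a * b) = σ a * δ b + δ a * b)
    (hrel : ∀ x : K, t * ι x = ι (σ x) * t + ι (δ x))
    (hbasis : ∀ f : R, ∃! c : ℕ →₀ K, f = c.sum fun i b => ι b * t ^ i)
    (eval : R → K → K)
    (heval : ∀ (f : R) (a : K), ∃ g : R, f - ι (eval f a) = g * (t - ι a))
    (f : R) (c : ℕ →₀ K) (n : ℕ)
    (hc : f = c.sum fun i b => ι b * t ^ i)
    (hlead : c n ≠ 0) (hdeg : ∀ i : ℕ, n < i → c i = 0) :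
    ∃ (r : ℕ) (as : Fin r → K), r ≤ n ∧
      ∀ a : K, eval f a = 0 →
        ∃ (i : Fin r) (x : K), x ≠ 0 ∧ a = σ x * as i * x⁻¹ + δ x * x⁻¹ :=
  OreExtension.HasDegree.exists_conj_classes_covering_roots hrel hbasis heval hδ ⟨c, hc, hlead, hdeg⟩
end

section
/- Let p be a prime, q = pⁿ, θ the Frobenius automorphism of 𝔽_q, and R = 𝔽_q[t;θ] the Ore extension. The polynomial G(t) = t^{(p−1)n+1} − t satisfies G(a) = 0 for every a ∈ 𝔽_q, and G is of minimal degree with this property: every nonzero h(t) ∈ R with h(a) = 0 for all a ∈ 𝔽_q has degree at least (p−1)n + 1. Equivalently, G(t) is the least left common multiple in R of the linear polynomials {t − a : a ∈ 𝔽_q}. -/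
/-!
Right evaluation at `a` is reduction modulo the left ideal `R(t - a)`, and `𝔽_q` embeds in
`R ⧸ R(t - a)` because right multiplication by `t - a` raises the degree of a nonzero element.
From `t a = θ(a) t` one gets `tᵏ ≡ Nₖ(a) mod R(t - a)`, so `(Σ cᵢ tⁱ)(a) = Σ cᵢ a^{Nᵢ}`, where for
the Frobenius `Nᵢ(a) = a^{[i]}` with `[i] = 1 + p + ⋯ + p^{i-1}`. Since `a^q = a`, writing
`i = kn + r` with `r < n` gives `a^{[i]} = a^{k[n] + [r]}`, and `(p - 1)[n] = q - 1`. Hence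
`G(a) = a^q - a = 0`, while for `i ≤ (p - 1)n` the exponents `k[n] + [r]` are pairwise distinct and
smaller than `q`: a nonzero `h` of degree at most `(p - 1)n` vanishing on `𝔽_q` would give a
nonzero ordinary polynomial of degree `< q` with `q` roots.
-/

open Finset

def skewNorm {F : Type*} [Monoid F] (σ : F → F) (a : F) : ℕ → F
  | 0 => 1
  | k + 1 => σ (skewNorm σ a k) * a

theorem skewNorm_pow {F : Type*} [Monoid F] (p : ℕ) (a : F) (k : ℕ) :
    skewNorm (· ^ p) a k = a ^ ∑ i ∈ range k, p ^ i := by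
  induction k with
  | zero => simp [skewNorm]
  | succ k ih =>
    rw [skewNorm, ih, ← pow_mul, ← pow_succ, sum_range_succ', sum_mul, pow_zero]
    simp only [pow_succ]

section SkewPolynomial

variable {F R : Type*} [Ring F] [Ring R] (ι : F →+* R) (t : R)

noncomputable def skewSum : (ℕ →₀ F) →+ R :=
  Finsupp.liftAddHom fun i => (AddMonoidHom.mulRight (t ^ i)).comp ι.toAddMonoidHom

theorem skewSum_apply (c : ℕ →₀ F) : skewSum ι t c = c.sum fun i b => ι b * t ^ i :=
  Finsupp.liftAddHom_apply _ _

theorem skewSum_single (i : ℕ) (b : F) : skewSum ι t (Finsupp.single i b) = ι b * t ^ i := by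
  simp [skewSum]

theorem skewSum_injective (hbasis : ∀ f : R, ∃! c : ℕ →₀ F, f = c.sum fun i b => ι b * t ^ i) :
    Function.Injective (skewSum ι t) := by
  intro c₁ c₂ h
  simp only [skewSum_apply] at h
  exact (hbasis _).unique rfl h

theorem skewSum_mul_t (c : ℕ →₀ F) :
    skewSum ι t c * t = skewSum ι t (c.mapDomain (· + 1)) := by
  rw [skewSum_apply, skewSum_apply, Finsupp.sum_mapDomain_index (by simp)
    (fun _ _ _ => by rw [map_add, add_mul]), Finsupp.sum_mul]
  simp only [mul_assoc, pow_succ]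

variable {ι t} {σ : F → F}

theorem pow_mul_map_eq_map_iterate_mul (hrel : ∀ x, t * ι x = ι (σ x) * t) (k : ℕ) (a : F) :
    t ^ k * ι a = ι (σ^[k] a) * t ^ k := by
  induction k generalizing a with
  | zero => simp
  | succ k ih =>
    rw [pow_succ, mul_assoc, hrel, ← mul_assoc, ih, mul_assoc, Function.iterate_succ_apply]

theorem exists_support_subset_skewSum_mul (hrel : ∀ x, t * ι x = ι (σ x) * t) (c : ℕ →₀ F)
    (a : F) : ∃ c' : ℕ →₀ F, c'.support ⊆ c.support ∧ skewSum ι t c * ι a = skewSum ι t c' := by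
  classical
  refine ⟨c.sum fun i b => Finsupp.single i (b * σ^[i] a), ?_, ?_⟩
  · refine Finsupp.support_sum.trans fun j hj => ?_
    obtain ⟨i, hi, hj⟩ := mem_biUnion.1 hj
    rwa [Finset.mem_singleton.1 (Finsupp.support_single_subset hj)]
  · rw [map_finsuppSum, skewSum_apply, Finsupp.sum_mul]
    refine sum_congr rfl fun i _ => ?_
    dsimp only
    rw [skewSum_single, mul_assoc, pow_mul_map_eq_map_iterate_mul hrel, ← mul_assoc, ← map_mul]

theorem eq_of_map_smodEq (hbasis : ∀ f : R, ∃! c : ℕ →₀ F, f = c.sum fun i b => ι b * t ^ i)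
    (hrel : ∀ x, t * ι x = ι (σ x) * t) {a e₁ e₂ : F}
    (h : ι e₁ ≡ ι e₂ [SMOD Ideal.span {t - ι a}]) : e₁ = e₂ := by
  obtain ⟨g, hg⟩ := Ideal.mem_span_singleton'.1 (SModEq.sub_mem.1 h)
  obtain ⟨c, hc, -⟩ := hbasis g
  obtain ⟨c', hc'c, hc'⟩ := exists_support_subset_skewSum_mul hrel c a
  have hcoeff : Finsupp.single 0 (e₁ - e₂) = c.mapDomain (· + 1) - c' := by
    apply skewSum_injective ι t hbasis
    rw [skewSum_single, pow_zero, mul_one, map_sub, ← hg, hc, ← skewSum_apply, map_sub,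
      ← skewSum_mul_t, ← hc', mul_sub]
  rw [← sub_eq_zero]
  -- compare the coefficients of `t ^ (d + 1)`, where `d` is the degree of `g`
  obtain hc0 | hc0 := c.support.eq_empty_or_nonempty
  · rw [hc0, Finset.subset_empty, Finsupp.support_eq_empty] at hc'c
    rwa [Finsupp.support_eq_empty.1 hc0, hc'c, Finsupp.mapDomain_zero, sub_zero,
      Finsupp.single_eq_zero] at hcoeff
  · set d := c.support.max' hc0
    have hd : c (d + 1) = 0 := Finsupp.notMem_support_iff.1 fun h => by
      have := c.support.le_max' _ h
      omega
    have := DFunLike.congr_fun hcoeff (d + 1)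
    rw [Finsupp.single_apply, if_neg (by omega), Finsupp.sub_apply,
      Finsupp.mapDomain_apply (add_left_injective 1), Finsupp.notMem_support_iff.1
        (fun h => (Finsupp.mem_support_iff.1 (hc'c h)) hd), sub_zero] at this
    exact absurd this.symm (Finsupp.mem_support_iff.1 (c.support.max'_mem hc0))

theorem pow_smodEq_skewNorm (hrel : ∀ x, t * ι x = ι (σ x) * t) (a : F) (k : ℕ) :
    t ^ k ≡ ι (skewNorm σ a k) [SMOD Ideal.span {t - ι a}] := by
  have ht : t ≡ ι a [SMOD Ideal.span {t - ι a}] := SModEq.sub_mem.2 (Ideal.subset_span rfl)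
  induction k with
  | zero => simp [skewNorm]
  | succ k ih =>
    calc t ^ (k + 1) = t * t ^ k := pow_succ' t k
      _ ≡ t * ι (skewNorm σ a k) [SMOD _] := ih.smul t
      _ = ι (σ (skewNorm σ a k)) * t := hrel _
      _ ≡ ι (σ (skewNorm σ a k)) * ι a [SMOD _] := ht.smul _
      _ = ι (skewNorm σ a (k + 1)) := (map_mul ι _ _).symm

theorem skewSum_smodEq (hrel : ∀ x, t * ι x = ι (σ x) * t) (a : F) (c : ℕ →₀ F) :
    skewSum ι t c ≡ ι (c.sum fun i b => b * skewNorm σ a i) [SMOD Ideal.span {t - ι a}] := by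
  rw [skewSum_apply, Finsupp.sum, Finsupp.sum, map_sum]
  refine SModEq.sum fun i _ => ?_
  rw [map_mul]
  exact (pow_smodEq_skewNorm hrel a i).smul (ι (c i))

end SkewPolynomial

section Exponents

variable {p n : ℕ}

theorem strictMono_geom_sum (hp : 0 < p) : StrictMono fun k => ∑ i ∈ range k, p ^ i :=
  strictMono_nat_of_lt_succ fun k => by
    rw [sum_range_succ]
    exact Nat.lt_add_of_pos_right (Nat.pow_pos hp)

theorem geom_sum_mul_sub_one_add_one (hp : 0 < p) (n : ℕ) :
    (∑ i ∈ range n, p ^ i) * (p - 1) + 1 = p ^ n := by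
  simpa only [Nat.sub_one_add_one hp.ne'] using geom_sum_mul_add (p - 1) n

def reducedExponent (p n i : ℕ) : ℕ := i / n * ∑ j ∈ range n, p ^ j + ∑ j ∈ range (i % n), p ^ j

theorem reducedExponent_injective (hp : 0 < p) (hn : 0 < n) :
    Function.Injective (reducedExponent p n) := by
  have hmono := strictMono_geom_sum hp
  have hdivmod : ∀ i, reducedExponent p n i / ∑ j ∈ range n, p ^ j = i / n ∧
      reducedExponent p n i % ∑ j ∈ range n, p ^ j = ∑ j ∈ range (i % n), p ^ j := fun i =>
    (Nat.div_mod_unique (by simpa using hmono hn)).2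
      ⟨by rw [reducedExponent]; ring, hmono (Nat.mod_lt i hn)⟩
  intro i j h
  obtain ⟨hquot, hrem⟩ := hdivmod i
  rw [h, (hdivmod j).1] at hquot
  rw [h, (hdivmod j).2] at hrem
  rw [← Nat.div_add_mod' i n, ← Nat.div_add_mod' j n, hquot, hmono.injective hrem]

theorem reducedExponent_lt (hp : 0 < p) (hn : 0 < n) {i : ℕ} (hi : i ≤ (p - 1) * n) :
    reducedExponent p n i < p ^ n := by
  have hr : ∑ j ∈ range (i % n), p ^ j < ∑ j ∈ range n, p ^ j :=
    strictMono_geom_sum hp (Nat.mod_lt i hn)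
  have hi' := Nat.div_add_mod' i n
  rw [reducedExponent, ← geom_sum_mul_sub_one_add_one hp]
  set N := ∑ j ∈ range n, p ^ j
  rcases Nat.eq_zero_or_pos (i % n) with h0 | hpos
  · have : i / n ≤ p - 1 := by nlinarith
    rw [h0, range_zero, sum_empty, add_zero]
    nlinarith [Nat.mul_le_mul_right N this]
  · have : i / n + 1 ≤ p - 1 := by nlinarith
    nlinarith [Nat.mul_le_mul_right N this]

end Exponents

section FiniteField

variable {F : Type*} [Field F] [Fintype F]

open Polynomial in
theorem FiniteField.eq_zero_of_forall_sum_mul_pow_eq_zero {α : Type*} {s : Finset α} {c : α → F}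
    {e : α → ℕ} (he : Set.InjOn e s) (hlt : ∀ i ∈ s, e i < Fintype.card F)
    (h : ∀ a : F, ∑ i ∈ s, c i * a ^ e i = 0) : ∀ i ∈ s, c i = 0 := by
  classical
  set Q : F[X] := ∑ i ∈ s, C (c i) * X ^ e i
  have hQ : Q = 0 := by
    refine eq_zero_of_natDegree_lt_card_of_eval_eq_zero Q Function.injective_id
      (fun a => by simpa [Q, eval_finsetSum] using h a) ?_
    have : Q.natDegree ≤ Fintype.card F - 1 := natDegree_sum_le_of_forall_le _ _
      fun i hi => (natDegree_C_mul_X_pow_le _ _).trans (Nat.le_sub_one_of_lt (hlt i hi))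
    have := Fintype.card_pos (α := F)
    omega
  intro i hi
  have hcoeff := congrArg (coeff · (e i)) hQ
  simp only [Q, finsetSum_coeff, coeff_C_mul_X_pow, coeff_zero] at hcoeff
  rwa [sum_eq_single_of_mem i hi fun j hj hji => if_neg fun h => hji (he hj hi h.symm),
    if_pos rfl] at hcoeff

variable {p n : ℕ}

theorem pow_geom_sum_mul_add (hcard : Fintype.card F = p ^ n) (a : F) (k r : ℕ) :
    a ^ (∑ i ∈ range (k * n + r), p ^ i) =
      a ^ (k * ∑ i ∈ range n, p ^ i + ∑ i ∈ range r, p ^ i) := by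
  induction k with
  | zero => simp
  | succ k ih =>
    have hfrob : a ^ p ^ n = a := hcard ▸ FiniteField.pow_card a
    rw [show (k + 1) * n + r = n + (k * n + r) by ring, sum_range_add, pow_add]
    simp only [pow_add p n, ← mul_sum, pow_mul, hfrob, ih]
    rw [← pow_add]
    congr 1
    ring

theorem pow_geom_sum_eq_pow_reducedExponent (hcard : Fintype.card F = p ^ n) (a : F) (i : ℕ) :
    a ^ (∑ j ∈ range i, p ^ j) = a ^ reducedExponent p n i := by
  rw [reducedExponent, ← pow_geom_sum_mul_add hcard, Nat.div_add_mod']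

theorem pow_geom_sum_sub_one_mul_add_one (hcard : Fintype.card F = p ^ n) (hp : 0 < p) (a : F) :
    a ^ ∑ i ∈ range ((p - 1) * n + 1), p ^ i = a := by
  rw [pow_geom_sum_mul_add hcard, mul_comm, sum_range_one, pow_zero,
    geom_sum_mul_sub_one_add_one hp, ← hcard, FiniteField.pow_card]

end FiniteField

theorem wedderburn_polynomial_of_Fq_general {F R : Type*} [Field F] [Fintype F] [Ring R]
    (p n : ℕ) (hcard : Fintype.card F = p ^ n)
    (ι : F →+* R) (t : R)
    (hrel : ∀ x : F, t * ι x = ι (x ^ p) * t)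
    (hbasis : ∀ f : R, ∃! c : ℕ →₀ F, f = c.sum fun i b => ι b * t ^ i)
    (eval : R → F → F)
    (heval : ∀ (f : R) (a : F), ∃ g : R, f - ι (eval f a) = g * (t - ι a)) :
    (∀ a : F, eval (t ^ ((p - 1) * n + 1) - t) a = 0) ∧
    (∀ (h : R) (c : ℕ →₀ F), h ≠ 0 → h = c.sum (fun i b => ι b * t ^ i) →
      (∀ a : F, eval h a = 0) → ∃ i ∈ c.support, (p - 1) * n + 1 ≤ i) := by
  have hq : 1 < p ^ n := hcard ▸ Fintype.one_lt_card
  have hn : 0 < n := Nat.pos_of_ne_zero (by rintro rfl; simp at hq)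
  have hp : 0 < p := Nat.pos_of_ne_zero (by rintro rfl; simp [hn.ne'] at hq)
  have eval_eq {f : R} {a e : F} (h : f ≡ ι e [SMOD Ideal.span {t - ι a}]) : eval f a = e := by
    obtain ⟨g, hg⟩ := heval f a
    refine eq_of_map_smodEq hbasis hrel (SModEq.trans ?_ h)
    exact (SModEq.sub_mem.2 (Ideal.mem_span_singleton'.2 ⟨g, hg.symm⟩)).symm
  refine ⟨fun a => eval_eq ?_, fun h c hh hc hzero => ?_⟩
  · simpa only [skewNorm_pow, pow_geom_sum_sub_one_mul_add_one hcard hp, sum_range_one,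
      pow_zero, pow_one, sub_self, map_zero] using
      (pow_smodEq_skewNorm hrel a ((p - 1) * n + 1)).sub (pow_smodEq_skewNorm hrel a 1)
  · by_contra! hdeg
    obtain ⟨i, hi⟩ : c.support.Nonempty :=
      Finsupp.support_nonempty_iff.2 (by rintro rfl; exact hh (by simp [hc]))
    refine Finsupp.mem_support_iff.1 hi (FiniteField.eq_zero_of_forall_sum_mul_pow_eq_zero
      (reducedExponent_injective hp hn).injOn
      (fun i hi => hcard ▸ reducedExponent_lt hp hn (Nat.le_of_lt_succ (hdeg i hi)))
      (fun a => ?_) i hi)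
    have hsum : (c.sum fun i b => b * skewNorm (· ^ p) a i) =
        ∑ i ∈ c.support, c i * a ^ reducedExponent p n i := by
      simp only [Finsupp.sum, skewNorm_pow, pow_geom_sum_eq_pow_reducedExponent hcard]
    rw [← hzero a, hc, ← skewSum_apply, ← hsum]
    exact (eval_eq (skewSum_smodEq hrel a c)).symm

/-- In `R = 𝔽_q[t;θ]`, `q = pⁿ`, `θ` the Frobenius, the polynomial
`G(t) = t^{(p−1)n+1} − t` vanishes at every `a ∈ 𝔽_q` (under right evaluation,
characterized by `f − ι(eval f a) ∈ R(t − a)`), and it is of minimal degree with this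
property: every nonzero `h ∈ R` vanishing at all points of `𝔽_q` has degree at least
`(p−1)n + 1`. -/
theorem wedderburn_polynomial_of_Fq {F R : Type*} [Field F] [Fintype F] [Ring R]
    (p n : ℕ) (hp : p.Prime) (hn : 0 < n) (hcard : Fintype.card F = p ^ n)
    (ι : F →+* R) (t : R)
    (hrel : ∀ x : F, t * ι x = ι (x ^ p) * t)
    (hbasis : ∀ f : R, ∃! c : ℕ →₀ F, f = c.sum fun i b => ι b * t ^ i)
    (eval : R → F → F)
    (heval : ∀ (f : R) (a : F), ∃ g : R, f - ι (eval f a) = g * (t - ι a)) :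
    (∀ a : F, eval (t ^ ((p - 1) * n + 1) - t) a = 0) ∧
    (∀ (h : R) (c : ℕ →₀ F), h ≠ 0 → h = c.sum (fun i b => ι b * t ^ i) →
      (∀ a : F, eval h a = 0) → ∃ i ∈ c.support, (p - 1) * n + 1 ≤ i) :=
  wedderburn_polynomial_of_Fq_general p n hcard ι t hrel hbasis eval heval
end

section
/- Let K be a division ring, σ an endomorphism of K, δ a σ-derivation of K, and f, g ∈ R = K[t;σ,δ]. For any a ∈ K: if g(a) = 0 then (fg)(a) = 0, and if g(a) ≠ 0 then (fg)(a) = f(a^{g(a)})·g(a), where a^{g(a)} = σ(g(a))a·g(a)⁻¹ + δ(g(a))·g(a)⁻¹. -/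
section Aux
variable {K R : Type*} [DivisionRing K] [Ring R] (ι : K →+* R) (t : R)

/-- `x` is represented by a finsupp supported in `[0, N)`. -/
def OreDegLT (N : ℕ) (x : R) : Prop :=
  ∃ d : ℕ →₀ K, x = (d.sum fun i b => ι b * t ^ i) ∧ ∀ j, N ≤ j → d j = 0

lemma oreDegLT_zero (N : ℕ) : OreDegLT ι t N (0 : R) :=
  ⟨0, by simp [Finsupp.sum_zero_index], fun j _ => rfl⟩

lemma oreDegLT_add {N : ℕ} {x y : R} (hx : OreDegLT ι t N x) (hy : OreDegLT ι t N y) :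
    OreDegLT ι t N (x + y) := by
  obtain ⟨d, hd, hdb⟩ := hx
  obtain ⟨e, he, heb⟩ := hy
  refine ⟨d + e, ?_, fun j hj => by simp [hdb j hj, heb j hj]⟩
  rw [hd, he, Finsupp.sum_add_index']
  · intro i; simp
  · intro i b c; simp [add_mul]

lemma oreDegLT_mono {N M : ℕ} (h : N ≤ M) {x : R} (hx : OreDegLT ι t N x) :
    OreDegLT ι t M x := by
  obtain ⟨d, hd, hdb⟩ := hx
  exact ⟨d, hd, fun j hj => hdb j (le_trans h hj)⟩

lemma oreDegLT_smul {N : ℕ} (b : K) {x : R} (hx : OreDegLT ι t N x) :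
    OreDegLT ι t N (ι b * x) := by
  obtain ⟨d, hd, hdb⟩ := hx
  refine ⟨d.mapRange (b * ·) (mul_zero b), ?_, fun j hj => by simp [hdb j hj]⟩
  rw [hd, Finsupp.sum_mapRange_index (by intro i; simp), Finsupp.mul_sum]
  exact Finsupp.sum_congr fun i _ => by rw [map_mul, mul_assoc]

lemma oreDegLT_shift {N : ℕ} {x : R} (hx : OreDegLT ι t N x) :
    OreDegLT ι t (N + 1) (x * t) := by
  obtain ⟨d, hd, hdb⟩ := hx
  refine ⟨d.mapDomain Nat.succ, ?_, fun j hj => ?_⟩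
  · rw [hd, Finsupp.sum_mapDomain_index (by intro i; simp) (by intro i b c; simp [add_mul]),
      Finsupp.sum_mul]
    exact Finsupp.sum_congr fun i _ => by rw [pow_succ, mul_assoc]
  · cases j with
    | zero => omega
    | succ k =>
      rw [Finsupp.mapDomain_apply Nat.succ_injective]
      exact hdb k (by omega)

variable (σ : K →+* K) (δ : K →+ K) (hrel : ∀ x : K, t * ι x = ι (σ x) * t + ι (δ x))

include hrel in
lemma oreDegLT_tmul {N : ℕ} {x : R} (hx : OreDegLT ι t N x) :
    OreDegLT ι t (N + 1) (t * x) := by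
  obtain ⟨d, hd, hdb⟩ := hx
  have key : t * x = (d.sum fun i b => ι (σ b) * t ^ i) * t
      + (d.sum fun i b => ι (δ b) * t ^ i) := by
    rw [hd, Finsupp.mul_sum, Finsupp.sum_mul, ← Finsupp.sum_add]
    refine Finsupp.sum_congr fun i _ => ?_
    rw [← mul_assoc, hrel, add_mul, mul_assoc, mul_assoc, ← pow_succ', pow_succ]
  have h1 : OreDegLT ι t N (d.sum fun i b => ι (σ b) * t ^ i) :=
    ⟨d.mapRange σ (map_zero σ), by
      rw [Finsupp.sum_mapRange_index (by intro i; simp)], fun j hj => by simp [hdb j hj]⟩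
  have h2 : OreDegLT ι t N (d.sum fun i b => ι (δ b) * t ^ i) :=
    ⟨d.mapRange δ (map_zero δ), by
      rw [Finsupp.sum_mapRange_index (by intro i; simp)], fun j hj => by simp [hdb j hj]⟩
  rw [key]
  exact oreDegLT_add ι t (oreDegLT_shift ι t h1) (oreDegLT_mono ι t (Nat.le_succ N) h2)

include hrel in
lemma oreDegLT_pow_mul (i : ℕ) (c : K) : OreDegLT ι t (i + 1) (t ^ i * ι c) := by
  induction i with
  | zero =>
    refine ⟨Finsupp.single 0 c, ?_, fun j hj => Finsupp.single_eq_of_ne (by omega)⟩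
    rw [Finsupp.sum_single_index (by simp)]; simp
  | succ k ih =>
    have : t ^ (k + 1) * ι c = t * (t ^ k * ι c) := by rw [pow_succ', mul_assoc]
    rw [this]
    exact oreDegLT_tmul ι t σ δ hrel ih

include hrel in
lemma oreDegLT_mul_iota {N : ℕ} {x : R} (hx : OreDegLT ι t N x) (c : K) :
    OreDegLT ι t N (x * ι c) := by
  obtain ⟨d, hd, hdb⟩ := hx
  rw [hd, Finsupp.sum_mul]
  unfold Finsupp.sum
  refine Finset.sum_induction _ (OreDegLT ι t N) (fun a b ha hb => oreDegLT_add ι t ha hb)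
    (oreDegLT_zero ι t N) (fun j hj => ?_)
  have hjN : j + 1 ≤ N := by
    by_contra h
    exact Finsupp.mem_support_iff.mp hj (hdb j (by omega))
  show OreDegLT ι t N (ι (d j) * t ^ j * ι c)
  rw [mul_assoc]
  exact oreDegLT_smul ι t _ (oreDegLT_mono ι t hjN (oreDegLT_pow_mul ι t σ δ hrel j c))

include hrel in
/-- Key uniqueness: a "constant" lying in `R(t - ι a)` is zero. -/
lemma ore_const_zero (hbasis : ∀ f : R, ∃! c : ℕ →₀ K, f = c.sum fun i b => ι b * t ^ i)
    (a c : K) (h : R) (hc : ι c = h * (t - ι a)) : c = 0 := by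
  by_contra hc0
  -- ι injectivity-type facts handled implicitly; build u with u * (t - ι a) = 1
  set u : R := ι c⁻¹ * h with hu
  have hu1 : u * (t - ι a) = 1 := by
    rw [hu, mul_assoc, ← hc, ← map_mul, inv_mul_cancel₀ hc0, map_one]
  obtain ⟨d, hd, hduniq⟩ := hbasis u
  have hd0 : d ≠ 0 := by
    rintro rfl
    simp [Finsupp.sum_zero_index] at hd
    rw [hd, zero_mul] at hu1
    -- 1 = 0 in R: contradiction via hbasis uniqueness at 0
    obtain ⟨e, he, heuniq⟩ := hbasis 0
    have h1 : (Finsupp.single 0 (1:K)) = e := heuniq _ (by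
      show (0:R) = (Finsupp.single 0 (1:K)).sum fun i b => ι b * t ^ i
      rw [Finsupp.sum_single_index (by simp)]; simp [← hu1])
    have h2 : (0 : ℕ →₀ K) = e := heuniq _ (by
      show (0:R) = (0 : ℕ →₀ K).sum fun i b => ι b * t ^ i
      simp [Finsupp.sum_zero_index])
    rw [← h2] at h1
    exact one_ne_zero (Finsupp.single_eq_zero.mp h1)
  have hsupp : d.support.Nonempty := Finsupp.support_nonempty_iff.mpr hd0
  set n := d.support.max' hsupp with hn
  have hdn : d n ≠ 0 := Finsupp.mem_support_iff.mp (d.support.max'_mem hsupp)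
  have hdb : ∀ j, n + 1 ≤ j → d j = 0 := by
    intro j hj
    by_contra h'
    have := Finset.le_max' d.support j (Finsupp.mem_support_iff.mpr h')
    omega
  -- u * t representation
  have hut : u * t = (d.mapDomain Nat.succ).sum fun i b => ι b * t ^ i := by
    rw [hd, Finsupp.sum_mul,
      Finsupp.sum_mapDomain_index (by intro i; simp) (by intro i b c; simp [add_mul])]
    exact Finsupp.sum_congr fun i _ => by rw [pow_succ, mul_assoc]
  -- u * ι a representation with degree bound
  obtain ⟨e, he, heb⟩ := oreDegLT_mul_iota ι t σ δ hrel ⟨d, hd, hdb⟩ a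
  have hone : (1 : R) = (d.mapDomain Nat.succ - e).sum fun i b => ι b * t ^ i := by
    rw [Finsupp.sum_sub_index (by intro i b c; simp [sub_mul]), ← hut, ← he, ← mul_sub, hu1]
  obtain ⟨w, hw, hwuniq⟩ := hbasis 1
  have h1 : (Finsupp.single 0 (1:K)) = w := hwuniq _ (by
    show (1:R) = (Finsupp.single 0 (1:K)).sum fun i b => ι b * t ^ i
    rw [Finsupp.sum_single_index (by simp)]; simp)
  have h2 : (d.mapDomain Nat.succ - e) = w := hwuniq _ hone
  rw [← h1] at h2
  have := DFunLike.congr_fun h2 (n + 1)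
  rw [Finsupp.sub_apply, Finsupp.mapDomain_apply Nat.succ_injective,
    heb (n + 1) le_rfl, Finsupp.single_eq_of_ne (by omega)] at this
  exact hdn (by simpa using this)

end Aux

/-- Product formula for right evaluation in an Ore extension `R = K[t;σ,δ]` over a
division ring `K`: for `f, g ∈ R` and `a ∈ K`, if `g(a) = 0` then `(fg)(a) = 0`, and
if `g(a) ≠ 0` then `(fg)(a) = f(a^{g(a)})·g(a)` where
`a^{g(a)} = σ(g(a))·a·g(a)⁻¹ + δ(g(a))·g(a)⁻¹`. -/
theorem product_evaluation_formula {K R : Type*} [DivisionRing K] [Ring R]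
    (ι : K →+* R) (t : R) (σ : K →+* K) (δ : K →+ K)
    (hδ : ∀ a b : K, δ (a * b) = σ a * δ b + δ a * b)
    (hrel : ∀ x : K, t * ι x = ι (σ x) * t + ι (δ x))
    (hbasis : ∀ f : R, ∃! c : ℕ →₀ K, f = c.sum fun i b => ι b * t ^ i)
    (eval : R → K → K)
    (heval : ∀ (f : R) (a : K), ∃ g : R, f - ι (eval f a) = g * (t - ι a))
    (f g : R) (a : K) :
    (eval g a = 0 → eval (f * g) a = 0) ∧
    (eval g a ≠ 0 → eval (f * g) a =
      eval f (σ (eval g a) * a * (eval g a)⁻¹ + δ (eval g a) * (eval g a)⁻¹) *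
        eval g a) := by
  obtain ⟨q, hq⟩ := heval g a
  obtain ⟨p2, hp2⟩ := heval (f * g) a
  constructor
  · intro hb0
    rw [hb0, map_zero, sub_zero] at hq
    refine ore_const_zero ι t σ δ hrel hbasis a _ (f * q - p2) ?_
    have : ι (eval (f * g) a) = f * g - p2 * (t - ι a) := by
      rw [← hp2]; noncomm_ring
    rw [this, hq, ← mul_assoc, sub_mul]
  · intro hb
    set b := eval g a with hbdef
    set a' := σ b * a * b⁻¹ + δ b * b⁻¹ with ha'
    obtain ⟨p, hp⟩ := heval f a'
    -- (t - ι a') * ι b = ι (σ b) * (t - ι a)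
    have hkey : (t - ι a') * ι b = ι (σ b) * (t - ι a) := by
      have hab : a' * b = σ b * a + δ b := by
        rw [ha', add_mul, mul_assoc (σ b * a), mul_assoc (δ b), inv_mul_cancel₀ hb,
          mul_one, mul_one]
      rw [sub_mul, hrel b, ← map_mul, hab, map_add, map_mul, mul_sub]
      noncomm_ring
    have hfb : f * ι b = ι (eval f a' * b) + p * (ι (σ b) * (t - ι a)) := by
      have hf : f = ι (eval f a') + p * (t - ι a') := by rw [← hp]; noncomm_ring
      rw [map_mul]
      conv_lhs => rw [hf]
      rw [add_mul, mul_assoc, hkey]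
    have hfg : f * g = f * ι b + f * q * (t - ι a) := by
      have hg : g = ι b + q * (t - ι a) := by rw [← hq]; noncomm_ring
      conv_lhs => rw [hg]
      rw [mul_add, mul_assoc]
    have h1 : ι (eval (f * g) a) = f * g - p2 * (t - ι a) := by rw [← hp2]; noncomm_ring
    have hsub : ι (eval (f * g) a - eval f a' * b)
        = (p * ι (σ b) + f * q - p2) * (t - ι a) := by
      rw [map_sub, h1, hfg, hfb]; noncomm_ring
    have hz := ore_const_zero ι t σ δ hrel hbasis a _ _ hsub
    exact sub_eq_zero.mp hz
end

section
/- Let K be a ring, σ an endomorphism of K, δ a σ-derivation of K, and f(t) = Σᵢ₌₀ⁿ bᵢtⁱ ∈ R = K[t;σ,δ]. For any a ∈ K, the right evaluation of f at a equals f(a) = Σᵢ₌₀ⁿ bᵢNᵢ(a), where N₀(a) = 1 and Nᵢ₊₁(a) = σ(Nᵢ(a))a + δ(Nᵢ(a)); that is, f(t) − Σᵢ₌₀ⁿ bᵢNᵢ(a) ∈ R(t−a). -/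
/-- In an Ore extension `R = K[t;σ,δ]` (a ring `R` with `ι : K → R`, an element `t`
satisfying `t·x = σ(x)·t + δ(x)`), the right evaluation of `f = Σ bᵢtⁱ` at `a ∈ K`
equals `Σ bᵢNᵢ(a)` where `N₀(a) = 1` and `Nᵢ₊₁(a) = σ(Nᵢ(a))·a + δ(Nᵢ(a))`; that is,
`f − ι(Σ bᵢNᵢ(a)) ∈ R·(t − a)`. -/
theorem eval_eq_sum_N {K R : Type*} [Ring K] [Ring R]
    (ι : K →+* R) (t : R) (σ : K →+* K) (δ : K →+ K)
    (hδ : ∀ a b : K, δ (a * b) = σ a * δ b + δ a * b)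
    (hrel : ∀ x : K, t * ι x = ι (σ x) * t + ι (δ x))
    (a : K) (N : ℕ → K) (hN0 : N 0 = 1)
    (hNsucc : ∀ i : ℕ, N (i + 1) = σ (N i) * a + δ (N i))
    (c : ℕ →₀ K) :
    ∃ g : R, (c.sum fun i b => ι b * t ^ i) - ι (c.sum fun i b => b * N i) =
      g * (t - ι a) := by
  have key : ∀ i : ℕ, ∃ g : R, t ^ i - ι (N i) = g * (t - ι a) := by
    intro i
    induction i with
    | zero => exact ⟨0, by simp [hN0]⟩
    | succ n ih =>
      obtain ⟨g, hg⟩ := ih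
      refine ⟨t * g + ι (σ (N n)), ?_⟩
      have : t ^ (n + 1) - ι (N (n + 1))
          = t * (t ^ n - ι (N n)) + (t * ι (N n) - ι (N (n + 1))) := by
        rw [pow_succ']; noncomm_ring
      rw [this, hg, hrel, hNsucc, map_add, map_mul]
      noncomm_ring
  choose g hg using key
  refine ⟨c.sum fun i b => ι b * g i, ?_⟩
  rw [Finsupp.sum, Finsupp.sum, Finsupp.sum, map_sum, Finset.sum_mul,
    ← Finset.sum_sub_distrib]
  refine Finset.sum_congr rfl fun i _ => ?_
  rw [map_mul, ← mul_sub, hg, mul_assoc]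
end

section
/- Let K be a division ring, σ an endomorphism of K, δ a σ-derivation of K, and a ∈ K. For every h ∈ R = K[t;σ,δ] and every nonzero x ∈ K, h(T_a)(x) = h(a^x)·x, where T_a(x) = σ(x)a + δ(x) and a^x = σ(x)ax⁻¹ + δ(x)x⁻¹. In particular, h(a) = h(T_a)(1). -/
/-!
Let `E(h) = Σ bᵢ Tⁱ` for a pseudo-linear map `T`. Since `T(dy) = σ(d)T(y) + δ(d)y` mirrors
the commutation rule `t·d = σ(d)t + δ(d)`, `h ↦ E(h)` is multiplicative, i.e. `K` is a left
`R`-module on which `t` acts by `T`. For `T = T_a` the element `t - a` kills `1`. Writing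
`h = g(t - aˣ) + h(aˣ)` and using `(t - aˣ)x = σ(x)(t - a)`, we get
`h·x = gσ(x)(t - a) + h(aˣ)x`; applying both sides to `1` gives `h(T_a)(x) = h(aˣ)x`.
-/

section MonomialBasis

variable {K R : Type*} [Ring K] [Ring R]

def HasMonomialBasis (ι : K →+* R) (t : R) : Prop :=
  ∀ f : R, ∃! c : ℕ →₀ K, f = c.sum fun i b => ι b * t ^ i

namespace HasMonomialBasis

variable {ι : K →+* R} {t : R} (hB : HasMonomialBasis ι t)

noncomputable def coeff (f : R) : ℕ →₀ K := (hB f).exists.choose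

theorem sum_coeff (f : R) : ((hB.coeff f).sum fun i b => ι b * t ^ i) = f :=
  (hB f).exists.choose_spec.symm

theorem coeff_eq {f : R} {c : ℕ →₀ K} (hc : f = c.sum fun i b => ι b * t ^ i) :
    hB.coeff f = c :=
  (hB f).unique (hB.sum_coeff f).symm hc

theorem coeff_add (f g : R) : hB.coeff (f + g) = hB.coeff f + hB.coeff g := by
  refine hB.coeff_eq ?_
  rw [Finsupp.sum_add_index' (fun _ => by simp) (fun _ _ _ => by rw [map_add, add_mul]),
    hB.sum_coeff, hB.sum_coeff]

theorem coeff_monomial (d : K) (j : ℕ) : hB.coeff (ι d * t ^ j) = Finsupp.single j d :=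
  hB.coeff_eq (by rw [Finsupp.sum_single_index (by simp)])

theorem induction_on (hB : HasMonomialBasis ι t) {p : R → Prop} (f : R) (zero : p 0)
    (add : ∀ f g, p f → p g → p (f + g)) (monomial : ∀ d j, p (ι d * t ^ j)) : p f := by
  rw [← hB.sum_coeff f]
  exact Finset.sum_induction _ p add zero fun j _ => monomial _ j

noncomputable def evalOp (T : K →+ K) : R →+ K → K :=
  AddMonoidHom.mk' (fun f y => (hB.coeff f).sum fun i b => b * T^[i] y) fun f g => by
    funext y
    rw [hB.coeff_add, Finsupp.sum_add_index' (fun _ => zero_mul _) fun _ _ _ => add_mul _ _ _]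
    rfl

variable (T : K →+ K)

theorem evalOp_apply (f : R) (y : K) :
    hB.evalOp T f y = (hB.coeff f).sum fun i b => b * T^[i] y :=
  rfl

theorem evalOp_monomial (d : K) (j : ℕ) (y : K) :
    hB.evalOp T (ι d * t ^ j) y = d * T^[j] y := by
  rw [evalOp_apply, coeff_monomial, Finsupp.sum_single_index (zero_mul _)]

theorem evalOp_apply_zero (f : R) : hB.evalOp T f 0 = 0 := by
  simp [evalOp_apply, iterate_map_zero]

theorem evalOp_C (d y : K) : hB.evalOp T (ι d) y = d * y := by
  simpa using hB.evalOp_monomial T d 0 y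

theorem evalOp_t (y : K) : hB.evalOp T t y = T y := by
  simpa using hB.evalOp_monomial T 1 1 y

theorem evalOp_C_mul (d : K) (f : R) (y : K) :
    hB.evalOp T (ι d * f) y = d * hB.evalOp T f y := by
  induction f using hB.induction_on with
  | zero => simp
  | add f g hf hg => simp only [mul_add, map_add, Pi.add_apply, hf, hg]
  | monomial e j => rw [← mul_assoc, ← map_mul, evalOp_monomial, evalOp_monomial, mul_assoc]

variable {σ : K →+* K} {δ : K →+ K}

theorem evalOp_t_mul (hrel : ∀ x : K, t * ι x = ι (σ x) * t + ι (δ x))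
    (hT : ∀ d y : K, T (d * y) = σ d * T y + δ d * y) (f : R) (y : K) :
    hB.evalOp T (t * f) y = T (hB.evalOp T f y) := by
  induction f using hB.induction_on with
  | zero => simp
  | add f g hf hg => simp only [mul_add, map_add, Pi.add_apply, hf, hg]
  | monomial e j =>
    have hcomm : t * (ι e * t ^ j) = ι (σ e) * t ^ (j + 1) + ι (δ e) * t ^ j := by
      rw [← mul_assoc, hrel, add_mul, mul_assoc, ← pow_succ']
    rw [hcomm, map_add, Pi.add_apply, evalOp_monomial, evalOp_monomial, evalOp_monomial, hT,
      Function.iterate_succ_apply']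

theorem evalOp_mul (hrel : ∀ x : K, t * ι x = ι (σ x) * t + ι (δ x))
    (hT : ∀ d y : K, T (d * y) = σ d * T y + δ d * y) (f g : R) (y : K) :
    hB.evalOp T (f * g) y = hB.evalOp T f (hB.evalOp T g y) := by
  have hpow : ∀ j, hB.evalOp T (t ^ j * g) y = T^[j] (hB.evalOp T g y) := by
    intro j
    induction j with
    | zero => simp
    | succ j ih =>
      rw [pow_succ', mul_assoc, hB.evalOp_t_mul T hrel hT, ih, Function.iterate_succ_apply']
  induction f using hB.induction_on with
  | zero => simp
  | add f f' hf hf' => simp only [add_mul, map_add, Pi.add_apply, hf, hf']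
  | monomial d j => rw [mul_assoc, evalOp_C_mul, hpow, evalOp_monomial]

end HasMonomialBasis

end MonomialBasis

section PseudoLinear

variable {K : Type*} [Ring K] {σ : K →+* K} {δ : K →+ K}

theorem map_one_eq_zero_of_leibniz (hδ : ∀ a b : K, δ (a * b) = σ a * δ b + δ a * b) :
    δ 1 = 0 := by
  simpa using hδ 1 1

def pseudoLinearMap (σ : K →+* K) (δ : K →+ K) (a : K) : K →+ K where
  toFun y := σ y * a + δ y
  map_zero' := by simp
  map_add' x y := by simp only [map_add, add_mul]; abel

theorem pseudoLinearMap_mul (hδ : ∀ a b : K, δ (a * b) = σ a * δ b + δ a * b) (a d y : K) :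
    pseudoLinearMap σ δ a (d * y) = σ d * pseudoLinearMap σ δ a y + δ d * y := by
  simp only [pseudoLinearMap, AddMonoidHom.coe_mk, ZeroHom.coe_mk, map_mul, hδ]
  noncomm_ring

end PseudoLinear

theorem t_sub_conj_mul {K R : Type*} [DivisionRing K] [Ring R] {ι : K →+* R} {t : R}
    {σ : K →+* K} {δ : K →+ K} (hrel : ∀ x : K, t * ι x = ι (σ x) * t + ι (δ x))
    (a : K) {x : K} (hx : x ≠ 0) :
    (t - ι (σ x * a * x⁻¹ + δ x * x⁻¹)) * ι x = ι (σ x) * (t - ι a) := by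
  have hconj : (σ x * a * x⁻¹ + δ x * x⁻¹) * x = σ x * a + δ x := by
    rw [add_mul, inv_mul_cancel_right₀ hx, inv_mul_cancel_right₀ hx]
  rw [sub_mul, hrel, ← map_mul, hconj, map_add, map_mul]
  noncomm_ring

/-- In an Ore extension `R = K[t;σ,δ]` over a division ring `K`, for every
`h = Σ bᵢtⁱ ∈ R`, every `a ∈ K` and every nonzero `x ∈ K`,
`h(T_a)(x) = h(a^x)·x`, where `T_a(y) = σ(y)a + δ(y)`, `h(T_a) = Σ bᵢ T_aⁱ`, and
`a^x = σ(x)ax⁻¹ + δ(x)x⁻¹`.  In particular `h(T_a)(1) = h(a)`. -/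
theorem pseudo_linear_evaluation {K R : Type*} [DivisionRing K] [Ring R]
    (ι : K →+* R) (t : R) (σ : K →+* K) (δ : K →+ K)
    (hδ : ∀ a b : K, δ (a * b) = σ a * δ b + δ a * b)
    (hrel : ∀ x : K, t * ι x = ι (σ x) * t + ι (δ x))
    (hbasis : ∀ f : R, ∃! c : ℕ →₀ K, f = c.sum fun i b => ι b * t ^ i)
    (eval : R → K → K)
    (heval : ∀ (f : R) (b : K), ∃ g : R, f - ι (eval f b) = g * (t - ι b))
    (a : K) (h : R) (c : ℕ →₀ K)
    (hc : h = c.sum fun i b => ι b * t ^ i) :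
    (∀ x : K, x ≠ 0 →
      (c.sum fun i b => b * (fun y => σ y * a + δ y)^[i] x) =
        eval h (σ x * a * x⁻¹ + δ x * x⁻¹) * x) ∧
    (c.sum fun i b => b * (fun y => σ y * a + δ y)^[i] 1) = eval h a := by
  have hB : HasMonomialBasis ι t := hbasis
  set T := pseudoLinearMap σ δ a
  have hT := pseudoLinearMap_mul hδ a
  have hδ1 := map_one_eq_zero_of_leibniz hδ
  have hlhs (y : K) :
      (c.sum fun i b => b * (fun y => σ y * a + δ y)^[i] y) = hB.evalOp T h y := by
    rw [hB.evalOp_apply, hB.coeff_eq hc]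
    rfl
  have hkill : hB.evalOp T (t - ι a) 1 = 0 := by
    simp [hB.evalOp_t, hB.evalOp_C, T, pseudoLinearMap, hδ1]
  have hmain (x : K) (hx : x ≠ 0) :
      hB.evalOp T h x = eval h (σ x * a * x⁻¹ + δ x * x⁻¹) * x := by
    set e := eval h (σ x * a * x⁻¹ + δ x * x⁻¹)
    obtain ⟨g, hg⟩ := heval h (σ x * a * x⁻¹ + δ x * x⁻¹)
    have hfactor : h * ι x - ι e * ι x = g * ι (σ x) * (t - ι a) := by
      rw [← sub_mul, hg, mul_assoc, t_sub_conj_mul hrel a hx, mul_assoc]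
    have happly := congrArg (fun f => hB.evalOp T f 1) hfactor
    simp only [map_sub, Pi.sub_apply, hB.evalOp_mul T hrel hT, hkill, hB.evalOp_C, mul_one,
      mul_zero, hB.evalOp_apply_zero] at happly
    exact sub_eq_zero.mp happly
  refine ⟨fun x hx => (hlhs x).trans (hmain x hx), ?_⟩
  simpa [hδ1] using (hlhs 1).trans (hmain 1 one_ne_zero)
end

section
/- Let K be a field and R = K[t₁;σ₁][t₂;σ₂] an iterated Ore extension with zero derivations, where σ₂ is an endomorphism of K[t₁;σ₁] with σ₂(t₁) = t₁ and σ₂(K) ⊆ K. Then for any (a₁,a₂) ∈ K², the identity (t₂ − σ₁(a₂))(t₁ − a₁) + (−t₁ + σ₂(a₁))(t₂ − a₂) = σ₁(a₂)a₁ − σ₂(a₁)a₂ holds in R. In particular, if σ₁(a₂)a₁ − σ₂(a₁)a₂ ≠ 0 then the left ideal I(a₁,a₂) = R(t₁−a₁) + R(t₂−a₂) equals R. -/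
/-- Let `K` be a field and `R = K[t₁;σ₁][t₂;σ₂]` an iterated Ore extension with zero
derivations, where `σ₂(t₁) = t₁` and `σ₂` restricts to an endomorphism `τ` on `K`.
Then `(t₂ − σ₁(a₂))(t₁ − a₁) + (−t₁ + σ₂(a₁))(t₂ − a₂) = σ₁(a₂)a₁ − σ₂(a₁)a₂`, and if
`σ₁(a₂)a₁ − σ₂(a₁)a₂ ≠ 0` the left ideal `R(t₁−a₁) + R(t₂−a₂)` is the whole ring. -/
theorem bad_points_left_ideal_top {K R : Type*} [Field K] [Ring R]
    (ι : K →+* R) (t1 t2 : R) (σ1 τ : K →+* K)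
    (h1 : ∀ x : K, t1 * ι x = ι (σ1 x) * t1)
    (h2 : ∀ x : K, t2 * ι x = ι (τ x) * t2)
    (h12 : t2 * t1 = t1 * t2)
    (a1 a2 : K) :
    (t2 - ι (σ1 a2)) * (t1 - ι a1) + (-t1 + ι (τ a1)) * (t2 - ι a2) =
      ι (σ1 a2 * a1 - τ a1 * a2) ∧
    (σ1 a2 * a1 - τ a1 * a2 ≠ 0 →
      Ideal.span {t1 - ι a1, t2 - ι a2} = ⊤) := by
  have key : (t2 - ι (σ1 a2)) * (t1 - ι a1) + (-t1 + ι (τ a1)) * (t2 - ι a2) =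
      ι (σ1 a2 * a1 - τ a1 * a2) := by
    simp only [sub_mul, mul_sub, neg_mul, add_mul, map_sub, map_mul]
    rw [h12, h2 a1, h1 a2]
    noncomm_ring
  refine ⟨key, fun hd => ?_⟩
  rw [Ideal.eq_top_iff_one]
  have hm : ι (σ1 a2 * a1 - τ a1 * a2) ∈ Ideal.span {t1 - ι a1, t2 - ι a2} := by
    rw [← key]
    exact add_mem (Ideal.mul_mem_left _ _ (Ideal.subset_span (by simp)))
      (Ideal.mul_mem_left _ _ (Ideal.subset_span (by simp)))
  have h := Ideal.mul_mem_left _ (ι (σ1 a2 * a1 - τ a1 * a2)⁻¹) hm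
  rwa [← map_mul, inv_mul_cancel₀ hd, map_one] at h
end
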